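/- arXiv:math/0511398 — 2 statements merged into one kernel-verified Lean document; each statement's English description precedes it below -/
import Mathlib

section
/- Let m > 0, ρ₀ > m and ρ₁ > ρ₀ be real numbers, and let h : (0,∞) → ℝ be a continuous nonincreasing function with h(r) = 0 for all r ≤ ρ₀ and h(r) = -m/2 for all r ≥ ρ₁. Define u(r) = 1 + m/(2ρ₁) + ∫_{ρ₁}^{r} h(τ)/τ² dτ for r > 0. Then for every r ≥ ρ₀ one has 2h(r)/r + u(r) ≥ 1 - m/(2ρ₀) > 0, and consequently 2h(r)/r + u(r) > 0 for every r > 0. -/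
open intervalIntegral Set MeasureTheory

/-- Inequality (1.6) in the proof of Proposition 1.1: with the radial conformal factor
`u(r) = 1 + m/(2ρ₁) + ∫_{ρ₁}^{r} h(τ)/τ² dτ`, one has `2h(r)/r + u(r) ≥ 1 - m/(2ρ₀) > 0`
for `r ≥ ρ₀`, and `2h(r)/r + u(r) > 0` for every `r > 0`. -/
theorem conformal_metric_mean_convex_spheres
    (m ρ₀ ρ₁ : ℝ) (hm : 0 < m) (hρ₀ : m < ρ₀) (hρ₁ : ρ₀ < ρ₁)
    (h : ℝ → ℝ)
    (hcont : ContinuousOn h (Set.Ioi (0 : ℝ)))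
    (hmono : AntitoneOn h (Set.Ioi (0 : ℝ)))
    (h0 : ∀ r : ℝ, 0 < r → r ≤ ρ₀ → h r = 0)
    (h1 : ∀ r : ℝ, ρ₁ ≤ r → h r = -m / 2)
    (u : ℝ → ℝ)
    (hu : ∀ r : ℝ, 0 < r → u r = 1 + m / (2 * ρ₁) + ∫ τ in ρ₁..r, h τ / τ ^ 2) :
    (∀ r : ℝ, ρ₀ ≤ r → 2 * h r / r + u r ≥ 1 - m / (2 * ρ₀)) ∧
    1 - m / (2 * ρ₀) > 0 ∧
    (∀ r : ℝ, 0 < r → 2 * h r / r + u r > 0) := by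
  have hρ₀pos : (0:ℝ) < ρ₀ := hm.trans hρ₀
  have hρ₁pos : (0:ℝ) < ρ₁ := hρ₀pos.trans hρ₁
  have hlow : ∀ r : ℝ, 0 < r → -m / 2 ≤ h r := by
    intro r hr
    rcases le_total ρ₁ r with hle | hle
    · rw [h1 r hle]
    · have := hmono (Set.mem_Ioi.mpr hr) (Set.mem_Ioi.mpr hρ₁pos) hle
      rwa [h1 ρ₁ le_rfl] at this
  have hsub : ∀ a b : ℝ, 0 < a → 0 < b → Set.uIcc a b ⊆ Set.Ioi (0:ℝ) := by
    intro a b ha hb x hx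
    exact lt_of_lt_of_le (lt_min ha hb) hx.1
  have hintg : ∀ (g : ℝ → ℝ), ContinuousOn g (Set.Ioi (0:ℝ)) → ∀ a b : ℝ, 0 < a → 0 < b →
      IntervalIntegrable (fun τ => g τ / τ ^ 2) volume a b := by
    intro g hg a b ha hb
    apply ContinuousOn.intervalIntegrable
    apply ContinuousOn.div (hg.mono (hsub a b ha hb)) ((continuous_pow 2).continuousOn)
    intro x hx
    exact pow_ne_zero 2 (ne_of_gt (hsub a b ha hb hx))
  have hint : ∀ a b : ℝ, 0 < a → 0 < b →
      IntervalIntegrable (fun τ => h τ / τ ^ 2) volume a b := hintg h hcont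
  have hintc : ∀ (c : ℝ) (a b : ℝ), 0 < a → 0 < b →
      IntervalIntegrable (fun τ => c / τ ^ 2) volume a b :=
    fun c a b ha hb => hintg (fun _ => c) continuousOn_const a b ha hb
  have hconst : ∀ (c a b : ℝ), 0 < a → 0 < b →
      (∫ τ in a..b, c / τ ^ 2) = c * (a⁻¹ - b⁻¹) := by
    intro c a b ha hb
    have hnot : (0:ℝ) ∉ Set.uIcc a b := fun hx => lt_irrefl 0 (Set.mem_Ioi.mp (hsub a b ha hb hx))
    have heq : (∫ τ in a..b, c / τ ^ 2) = c * ∫ τ in a..b, (τ:ℝ) ^ (-2 : ℤ) := by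
      rw [← intervalIntegral.integral_const_mul]
      apply intervalIntegral.integral_congr
      intro x hx
      show c / x ^ 2 = c * x ^ (-2 : ℤ)
      rw [zpow_neg, div_eq_mul_inv, ← zpow_natCast x 2]
      norm_num
    rw [heq, integral_zpow (Or.inr ⟨by norm_num, hnot⟩)]
    norm_num
    exact Or.inl (by ring)
  -- estimate for 0 < r ≤ ρ₁
  have keyA : ∀ r : ℝ, 0 < r → r ≤ ρ₁ →
      1 + m / (2 * ρ₁) + h r * (r⁻¹ + ρ₁⁻¹) ≤ 2 * h r / r + u r := by
    intro r hr hrle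
    have hI : (∫ τ in r..ρ₁, h τ / τ ^ 2) ≤ h r * (r⁻¹ - ρ₁⁻¹) := by
      have hmon : (∫ τ in r..ρ₁, h τ / τ ^ 2) ≤ ∫ τ in r..ρ₁, h r / τ ^ 2 := by
        apply intervalIntegral.integral_mono_on hrle (hint r ρ₁ hr hρ₁pos)
          (hintc (h r) r ρ₁ hr hρ₁pos)
        intro x hx
        have hxpos : 0 < x := lt_of_lt_of_le hr hx.1
        have hhx : h x ≤ h r := hmono (Set.mem_Ioi.mpr hr) (Set.mem_Ioi.mpr hxpos) hx.1
        have : (0:ℝ) < x ^ 2 := by positivity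
        gcongr
      calc (∫ τ in r..ρ₁, h τ / τ ^ 2) ≤ ∫ τ in r..ρ₁, h r / τ ^ 2 := hmon
        _ = h r * (r⁻¹ - ρ₁⁻¹) := hconst (h r) r ρ₁ hr hρ₁pos
    have hur : u r = 1 + m / (2 * ρ₁) - ∫ τ in r..ρ₁, h τ / τ ^ 2 := by
      rw [hu r hr, intervalIntegral.integral_symm]; ring
    have h2 : 2 * h r / r = 2 * (h r * r⁻¹) := by rw [div_eq_mul_inv]; ring
    rw [hur, h2]
    linarith [hI, (by ring : h r * (r⁻¹ + ρ₁⁻¹) = h r * r⁻¹ + h r * ρ₁⁻¹),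
      (by ring : h r * (r⁻¹ - ρ₁⁻¹) = h r * r⁻¹ - h r * ρ₁⁻¹)]
  -- exact value for r ≥ ρ₁
  have keyB : ∀ r : ℝ, ρ₁ ≤ r → 2 * h r / r + u r = 1 - m / (2 * r) := by
    intro r hrge
    have hr : 0 < r := hρ₁pos.trans_le hrge
    have hIeq : (∫ τ in ρ₁..r, h τ / τ ^ 2) = ∫ τ in ρ₁..r, (-m/2) / τ ^ 2 := by
      apply intervalIntegral.integral_congr
      intro x hx
      have hx1 : ρ₁ ≤ x := by
        rcases hx.1 with h'
        calc ρ₁ = min ρ₁ r := (min_eq_left hrge).symm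
          _ ≤ x := h'
      show h x / x ^ 2 = -m / 2 / x ^ 2
      rw [h1 x hx1]
    rw [hu r hr, hIeq, hconst (-m/2) ρ₁ r hρ₁pos hr, h1 r hrge]
    field_simp
    ring
  -- combined lower bound: ∀ r > 0, 1 - m/(2r) ≤ 2h/r + u
  have key : ∀ r : ℝ, 0 < r → 1 - m / (2 * r) ≤ 2 * h r / r + u r := by
    intro r hr
    rcases le_total r ρ₁ with hle | hge
    · have := keyA r hr hle
      have hlr : -m / 2 ≤ h r := hlow r hr
      have hpos : (0:ℝ) < r⁻¹ + ρ₁⁻¹ := by positivity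
      have : 1 + m / (2 * ρ₁) + (-m/2) * (r⁻¹ + ρ₁⁻¹) ≤ 2 * h r / r + u r := by
        nlinarith [mul_le_mul_of_nonneg_right hlr (le_of_lt hpos)]
      have heq : 1 + m / (2 * ρ₁) + (-m/2) * (r⁻¹ + ρ₁⁻¹) = 1 - m / (2 * r) := by
        field_simp
        ring
      linarith [heq ▸ this]
    · rw [keyB r hge]
  refine ⟨?_, ?_, ?_⟩
  · intro r hrge
    have hr : 0 < r := hρ₀pos.trans_le hrge
    have h2 : m / (2 * r) ≤ m / (2 * ρ₀) := by
      apply div_le_div_of_nonneg_left (le_of_lt hm) (by positivity) (by linarith)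
    have := key r hr
    linarith
  · have : m / (2 * ρ₀) < 1 := by
      rw [div_lt_one (by positivity)]; linarith
    linarith
  · intro r hr
    rcases le_total ρ₀ r with hge | hle
    · have h2 : m / (2 * r) ≤ m / (2 * ρ₀) :=
        div_le_div_of_nonneg_left (le_of_lt hm) (by positivity) (by linarith)
      have h3 : m / (2 * ρ₀) < 1 := by rw [div_lt_one (by positivity)]; linarith
      have := key r hr
      linarith
    · have hkA := keyA r hr (le_of_lt (lt_of_le_of_lt hle hρ₁))
      have hr0 := h0 r hr hle
      rw [hr0] at hkA ⊢
      have hpos : (0:ℝ) < m / (2 * ρ₁) := by positivity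
      nlinarith [hkA]
end

section
/- Let m > 0, ε = m²/64 and ρ₀ = 1/(4m). Let k : (0,∞) → ℝ be a continuous function with k(τ) ≤ 0 for all τ, k(ρ) = -(ρ/4)·(1 + ρ²/4)^{-3/2} for ρ ≤ ρ₀, and k(ρ) = -(m/(2√ε))·ρ^{-2} for ρ ≥ 2ρ₀. Set b₀ = √ε + m/(4·√ε·ρ₀) - ∫_{0}^{2ρ₀} k(τ) dτ and define u_m(ρ) = b₀ + ∫_{0}^{ρ} k(τ) dτ for ρ > 0. Then u_m(ρ) > 0 for every ρ > 0, and u_m(ρ) = √ε·(1 + m/(2ερ)) for every ρ ≥ 2ρ₀. -/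
/-!
The choice of `b₀` makes `u_m(ρ) = A + ∫_{2ρ₀}^ρ k` with `A = √ε + m/(4√ε ρ₀) > 0`. Beyond `2ρ₀`
the integrand is `-(m/(2√ε)) τ⁻²`, whose integral from `2ρ₀` cancels the `m/(4√ε ρ₀)` in `A` and
leaves `√ε + m/(2√ε ρ) = √ε (1 + m/(2ερ))`; below `2ρ₀` the integral is nonnegative because
`k ≤ 0`, so `u_m ≥ A > 0`. Integrability of `k` near `0` comes from its explicit form on `(0, ρ₀]`.
-/

open Set intervalIntegral
open MeasureTheory (volume)

lemma intervalIntegrable_zero_of_continuousOn_Ioi {k : ℝ → ℝ} {c ρ : ℝ}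
    (hcont : ContinuousOn k (Ioi 0)) (hk : IntervalIntegrable k volume 0 c)
    (hc : 0 < c) (hρ : 0 < ρ) : IntervalIntegrable k volume 0 ρ :=
  hk.trans <| (hcont.mono fun _ hx => (lt_min hc hρ).trans_le hx.1).intervalIntegrable

lemma integral_nonneg_of_nonpos_of_ge {f : ℝ → ℝ} {a b : ℝ} (hba : b ≤ a)
    (hf : ∀ x, f x ≤ 0) : 0 ≤ ∫ x in a..b, f x := by
  rw [integral_symm, ← integral_neg]
  exact integral_nonneg hba fun x _ => neg_nonneg.2 (hf x)

lemma integral_neg_mul_inv_sq (C : ℝ) {a b : ℝ} (ha : 0 < a) (hb : 0 < b) :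
    ∫ τ in a..b, -C * τ⁻¹ ^ 2 = C * (b⁻¹ - a⁻¹) := by
  have h0 : (0 : ℝ) ∉ uIcc a b := fun h => (lt_min ha hb).not_ge h.1
  have hpow : ∀ τ : ℝ, -C * τ⁻¹ ^ 2 = -C * τ ^ (-2 : ℤ) := fun τ => by
    rw [zpow_neg, zpow_ofNat, inv_pow]
  simp only [hpow]
  rw [integral_const_mul, integral_zpow (Or.inr ⟨by decide, h0⟩)]
  norm_num
  ring

lemma add_integral_eq_of_eq_sub_integral {k : ℝ → ℝ} {A b₀ c ρ : ℝ}
    (hb₀ : b₀ = A - ∫ τ in (0 : ℝ)..c, k τ) (hc : IntervalIntegrable k volume 0 c)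
    (hρ : IntervalIntegrable k volume 0 ρ) :
    b₀ + ∫ τ in (0 : ℝ)..ρ, k τ = A + ∫ τ in c..ρ, k τ := by
  rw [hb₀, ← integral_interval_sub_left hρ hc]
  ring

lemma add_mul_inv_sub_inv_eq {ε m c ρ : ℝ} (hε : 0 < ε) (hc : c ≠ 0) (hρ : ρ ≠ 0) :
    Real.sqrt ε + m / (2 * Real.sqrt ε * c) + m / (2 * Real.sqrt ε) * (ρ⁻¹ - c⁻¹)
      = Real.sqrt ε * (1 + m / (2 * ε * ρ)) := by
  have hs : Real.sqrt ε ≠ 0 := (Real.sqrt_pos.2 hε).ne'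
  field_simp
  linear_combination (-(c * m)) * Real.sq_sqrt hε.le

/-- The conformal factor `u_m` from the proof of Proposition 1.1 (equations (1.11)–(1.14)):
with `ε = m²/64`, `ρ₀ = 1/(4m)`, a continuous nonpositive gluing function `k` equal to
`-(ρ/4)(1 + ρ²/4)^{-3/2}` for `ρ ≤ ρ₀` and to `-(m/(2√ε))ρ⁻²` for `ρ ≥ 2ρ₀`, and
`b₀ = √ε + m/(4√ε ρ₀) - ∫₀^{2ρ₀} k`, the function `u_m(ρ) = b₀ + ∫₀^ρ k` is positive on
`(0,∞)` and equals `√ε (1 + m/(2ερ))` for `ρ ≥ 2ρ₀`. -/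
theorem glued_conformal_factor
    (m ε ρ₀ : ℝ) (hm : 0 < m) (hε : ε = m ^ 2 / 64) (hρ₀ : ρ₀ = 1 / (4 * m))
    (k : ℝ → ℝ)
    (hcont : ContinuousOn k (Set.Ioi (0 : ℝ)))
    (hnonpos : ∀ τ : ℝ, k τ ≤ 0)
    (hk0 : ∀ ρ : ℝ, 0 < ρ → ρ ≤ ρ₀ → k ρ = -(ρ / 4) * (1 + ρ ^ 2 / 4) ^ (-(3 : ℝ) / 2))
    (hk1 : ∀ ρ : ℝ, 2 * ρ₀ ≤ ρ → k ρ = -(m / (2 * Real.sqrt ε)) * ρ⁻¹ ^ 2)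
    (b₀ : ℝ)
    (hb₀ : b₀ = Real.sqrt ε + m / (4 * Real.sqrt ε * ρ₀) - ∫ τ in (0 : ℝ)..(2 * ρ₀), k τ)
    (u : ℝ → ℝ)
    (hu : ∀ ρ : ℝ, 0 < ρ → u ρ = b₀ + ∫ τ in (0 : ℝ)..ρ, k τ) :
    (∀ ρ : ℝ, 0 < ρ → 0 < u ρ) ∧
    (∀ ρ : ℝ, 2 * ρ₀ ≤ ρ → u ρ = Real.sqrt ε * (1 + m / (2 * ε * ρ))) := by
  have hρ₀pos : 0 < ρ₀ := by rw [hρ₀]; positivity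
  have hεpos : 0 < ε := by rw [hε]; positivity
  have hk_int_ρ₀ : IntervalIntegrable k volume 0 ρ₀ := by
    have hg : Continuous fun τ : ℝ => -(τ / 4) * (1 + τ ^ 2 / 4) ^ (-(3 : ℝ) / 2) :=
      (by fun_prop : Continuous fun τ : ℝ => -(τ / 4)).mul <|
        (by fun_prop : Continuous fun τ : ℝ => 1 + τ ^ 2 / 4).rpow_const
          fun _ => Or.inl (by positivity)
    refine (hg.intervalIntegrable 0 ρ₀).congr ?_
    rw [uIoc_of_le hρ₀pos.le]
    exact fun x hx => (hk0 x hx.1 hx.2).symm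
  have hk_int : ∀ ρ, 0 < ρ → IntervalIntegrable k volume 0 ρ := fun ρ hρ =>
    intervalIntegrable_zero_of_continuousOn_Ioi hcont hk_int_ρ₀ hρ₀pos hρ
  have hu_shift : ∀ ρ, 0 < ρ →
      u ρ = Real.sqrt ε + m / (2 * Real.sqrt ε * (2 * ρ₀)) + ∫ τ in (2 * ρ₀)..ρ, k τ := by
    intro ρ hρ
    rw [hu ρ hρ, add_integral_eq_of_eq_sub_integral hb₀ (hk_int _ (by positivity)) (hk_int ρ hρ)]
    congr 2
    ring
  have hform : ∀ ρ, 2 * ρ₀ ≤ ρ → u ρ = Real.sqrt ε * (1 + m / (2 * ε * ρ)) := by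
    intro ρ hρ
    have hρpos : 0 < ρ := by linarith
    have hk_tail : EqOn k (fun τ => -(m / (2 * Real.sqrt ε)) * τ⁻¹ ^ 2) (uIcc (2 * ρ₀) ρ) :=
      fun τ hτ => hk1 τ (by rw [uIcc_of_le hρ] at hτ; exact hτ.1)
    rw [hu_shift ρ hρpos, integral_congr hk_tail, integral_neg_mul_inv_sq _ (by positivity) hρpos,
      add_mul_inv_sub_inv_eq hεpos (by positivity) hρpos.ne']
  refine ⟨fun ρ hρ => ?_, hform⟩
  rcases le_or_gt (2 * ρ₀) ρ with h | h
  · rw [hform ρ h]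
    positivity
  · rw [hu_shift ρ hρ]
    have hint := integral_nonneg_of_nonpos_of_ge h.le hnonpos
    have hs : 0 < Real.sqrt ε := Real.sqrt_pos.2 hεpos
    positivity
end
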